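/- arXiv:2002.10087 — 2 statements merged into one kernel-verified Lean document; each statement's English description precedes it below -/
import Mathlib

section
/- Let S : [-π,π] → [0,∞) be a measurable function with ∫_{-π}^{π} S(x)/x² dx < ∞, and set σ² = 2 ∫_{-π}^{π} S(x)/x² dx. For an interval I ⊂ ℝ write φ̂_I(x) = ∫_I e^{-ixt} dt. Then as L → ∞: (i) ∫_{-π}^{π} |φ̂_{[0,L]}(x)|² S(x) dx → σ²; (ii) ∫_{-π}^{π} φ̂_{[0,L]}(x) · conj(φ̂_{[L,2L]}(x)) · S(x) dx → -σ²/2; (iii) for every integer k ≥ 2, ∫_{-π}^{π} φ̂_{[0,L]}(x) · conj(φ̂_{[kL,(k+1)L]}(x)) · S(x) dx → 0. -/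
/-!
For `x ≠ 0`, `φ̂_{[0,L]}(x) · conj φ̂_{[c,c+L]}(x) = (2e^{icx} - e^{i(c+L)x} - e^{i(c-L)x}) / x²`.
Hence each integral is the second difference `2F(c) - F(c+L) - F(c-L)` of
`F(w) = ∫_{-π}^{π} e^{iwx} S(x)/x² dx`.
With `c = kL`, every argument is a multiple `aL` of `L`; by Riemann–Lebesgue `F(aL) → 0` unless
`a = 0`, and `F(0) = σ²/2`.
-/

open MeasureTheory Real Filter

/-- The Fourier transform of the indicator of the interval `[a, b]`. -/
noncomputable def phiHatI (a b : ℝ) (x : ℝ) : ℂ :=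
  ∫ t in a..b, Complex.exp (-Complex.I * x * t)

open Complex ComplexConjugate

noncomputable def fourierOn (s : Set ℝ) (g : ℝ → ℂ) (w : ℝ) : ℂ :=
  ∫ x in s, cexp (I * w * x) * g x

@[simp]
theorem fourierOn_zero (s : Set ℝ) (g : ℝ → ℂ) : fourierOn s g 0 = ∫ x in s, g x := by
  simp [fourierOn]

theorem integrableOn_cexp_mul {s : Set ℝ} {g : ℝ → ℂ} (hg : IntegrableOn g s) (w : ℝ) :
    IntegrableOn (fun x : ℝ => cexp (I * w * x) * g x) s := by
  refine hg.bdd_mul (c := 1) (by fun_prop) (.of_forall fun x => ?_)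
  rw [norm_exp]
  simp

/-- Riemann–Lebesgue: `fourierOn s g w` is Mathlib's `𝓕 (s.indicator g)` at `-w / (2π)`. -/
theorem tendsto_fourierOn_cocompact {s : Set ℝ} (hs : MeasurableSet s) (g : ℝ → ℂ) :
    Tendsto (fourierOn s g) (cocompact ℝ) (nhds 0) := by
  have h2π : -(2 * π)⁻¹ ≠ 0 := by simp [Real.pi_ne_zero]
  refine ((Real.zero_at_infty_fourier (s.indicator g)).comp
    (tendsto_cocompact_mul_left₀ h2π)).congr fun w => ?_
  rw [Function.comp_apply, Real.fourier_real_eq_integral_exp_smul, fourierOn,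
    ← integral_indicator hs]
  congr 1 with x
  by_cases hx : x ∈ s
  · have : -2 * π * x * (-(2 * π)⁻¹ * w) = w * x := by field_simp
    simp only [Set.indicator_of_mem hx, this, smul_eq_mul]
    push_cast
    ring_nf
  · simp [hx]

theorem tendsto_fourierOn_const_mul_atTop {s : Set ℝ} (hs : MeasurableSet s) (g : ℝ → ℂ)
    (a : ℝ) :
    Tendsto (fun L => fourierOn s g (a * L)) atTop
      (nhds (if a = 0 then ∫ x in s, g x else 0)) := by
  split_ifs with ha
  · simp [ha]
  · exact (tendsto_fourierOn_cocompact hs g).comp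
      ((tendsto_cocompact_mul_left₀ ha).comp (tendsto_id.mono_right atTop_le_cocompact))

theorem phiHatI_eq_div (a b : ℝ) {x : ℝ} (hx : x ≠ 0) :
    phiHatI a b x = (cexp (-I * x * b) - cexp (-I * x * a)) / (-I * x) := by
  have hc : (-I * x : ℂ) ≠ 0 := by simp [hx]
  simpa [phiHatI, mul_assoc] using integral_exp_mul_complex (a := a) (b := b) hc

theorem phiHatI_mul_conj_phiHatI (L c : ℝ) {x : ℝ} (hx : x ≠ 0) :
    phiHatI 0 L x * conj (phiHatI c (c + L) x) =
      (2 * cexp (I * c * x) - cexp (I * (c + L : ℝ) * x) - cexp (I * (c - L : ℝ) * x)) / x ^ 2 := by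
  have hx' : (x : ℂ) ≠ 0 := ofReal_ne_zero.mpr hx
  have h₁ : cexp (-(I * x * L)) * cexp (I * x * (c + L)) = cexp (I * x * c) := by
    rw [← Complex.exp_add]; ring_nf
  have h₂ : cexp (-(I * x * L)) * cexp (I * x * c) = cexp (I * x * (c - L)) := by
    rw [← Complex.exp_add]; ring_nf
  simp only [phiHatI_eq_div _ _ hx, map_div₀, map_sub, ← Complex.exp_conj, map_mul, map_neg, conj_I,
    conj_ofReal, ofReal_zero, mul_zero, Complex.exp_zero]
  push_cast
  field_simp
  rw [I_sq]
  linear_combination h₂ - h₁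

theorem setIntegral_phiHatI_mul_conj_phiHatI_mul {s : Set ℝ} {S : ℝ → ℂ}
    (hS : IntegrableOn (fun x => S x / x ^ 2) s) (L c : ℝ) :
    ∫ x in s, phiHatI 0 L x * conj (phiHatI c (c + L) x) * S x =
      2 * fourierOn s (fun x => S x / x ^ 2) c - fourierOn s (fun x => S x / x ^ 2) (c + L)
        - fourierOn s (fun x => S x / x ^ 2) (c - L) := by
  set e : ℝ → ℝ → ℂ := fun w x => cexp (I * w * x) * (S x / x ^ 2)
  have hint : ∀ w, IntegrableOn (e w) s := integrableOn_cexp_mul hS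
  calc ∫ x in s, phiHatI 0 L x * conj (phiHatI c (c + L) x) * S x
      = ∫ x in s, 2 * e c x - e (c + L) x - e (c - L) x := by
        refine integral_congr_ae ((ae_restrict_of_ae (volume.ae_ne 0)).mono fun x hx => ?_)
        dsimp only [e]
        rw [phiHatI_mul_conj_phiHatI L c hx]
        ring
    _ = _ := by
        have h₁ : IntegrableOn (fun x => 2 * e c x) s := (hint c).const_mul 2
        have h₂ : IntegrableOn (fun x => 2 * e c x - e (c + L) x) s := h₁.sub (hint _)
        rw [integral_sub h₂ (hint _), integral_sub h₁ (hint _), integral_const_mul]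
        rfl

theorem tendsto_setIntegral_phiHatI_mul_conj_phiHatI_mul {s : Set ℝ} (hs : MeasurableSet s)
    {S : ℝ → ℂ} (hS : IntegrableOn (fun x => S x / x ^ 2) s) (k : ℝ) :
    Tendsto (fun L => ∫ x in s, phiHatI 0 L x * conj (phiHatI (k * L) ((k + 1) * L) x) * S x)
      atTop (nhds (2 * (if k = 0 then ∫ x in s, S x / x ^ 2 else 0)
        - (if k + 1 = 0 then ∫ x in s, S x / x ^ 2 else 0)
        - (if k - 1 = 0 then ∫ x in s, S x / x ^ 2 else 0))) := by
  have hlim := tendsto_fourierOn_const_mul_atTop hs (fun x => S x / x ^ 2)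
  refine (((hlim k).const_mul 2).sub (hlim (k + 1))).sub (hlim (k - 1)) |>.congr fun L => ?_
  rw [add_one_mul, sub_one_mul, setIntegral_phiHatI_mul_conj_phiHatI_mul hS]

theorem variance_covariance_intervals_1d_general
    (S : ℝ → ℝ)
    (hSint : IntegrableOn (fun x => S x / x ^ 2) (Set.Icc (-π) π))
    (σ2 : ℝ) (hσ2 : σ2 = 2 * ∫ x in Set.Icc (-π) π, S x / x ^ 2) :
    Tendsto (fun L : ℝ =>
        ∫ x in Set.Icc (-π) π, ‖phiHatI 0 L x‖ ^ 2 * S x)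
      atTop (nhds σ2) ∧
    Tendsto (fun L : ℝ =>
        ∫ x in Set.Icc (-π) π,
          phiHatI 0 L x * (starRingEnd ℂ) (phiHatI L (2 * L) x) * (S x : ℂ))
      atTop (nhds (-(σ2 / 2) : ℂ)) ∧
    ∀ k : ℕ, 2 ≤ k →
      Tendsto (fun L : ℝ =>
          ∫ x in Set.Icc (-π) π,
            phiHatI 0 L x * (starRingEnd ℂ) (phiHatI (k * L) ((k + 1) * L) x) * (S x : ℂ))
        atTop (nhds (0 : ℂ)) := by
  have hS : IntegrableOn (fun x => (S x : ℂ) / (x : ℂ) ^ 2) (Set.Icc (-π) π) := by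
    simpa [IntegrableOn] using hSint.ofReal (𝕜 := ℂ)
  have hmass : ∫ x in Set.Icc (-π) π, (S x : ℂ) / (x : ℂ) ^ 2 = σ2 / 2 := by
    rw [hσ2, ofReal_mul, ← integral_complex_ofReal]
    push_cast
    ring
  have hcov := tendsto_setIntegral_phiHatI_mul_conj_phiHatI_mul measurableSet_Icc hS
  refine ⟨?_, ?_, fun k hk => ?_⟩
  · rw [← tendsto_ofReal_iff]
    convert hcov 0 using 2 with L
    · simp only [zero_mul, zero_add, one_mul, ← integral_complex_ofReal]
      refine integral_congr_ae (.of_forall fun x => ?_)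
      simp [mul_conj']
    · norm_num [hmass, mul_div_cancel₀]
  · simpa [two_mul, one_add_one_eq_two, hmass] using hcov 1
  · have hk : (2 : ℝ) ≤ k := by exact_mod_cast hk
    simpa [show (k : ℝ) ≠ 0 by linarith, show (k : ℝ) + 1 ≠ 0 by linarith,
      show (k : ℝ) - 1 ≠ 0 by linarith] using hcov k

/-- asymptotics of the variance and covariances of local masses of adjacent
intervals for a 1D random field whose structure function `S` satisfies
`∫_{-π}^{π} S(x)/x² dx < ∞`. -/
theorem variance_covariance_intervals_1d
    (S : ℝ → ℝ) (hSmeas : Measurable S) (hS0 : ∀ x, 0 ≤ S x)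
    (hSint : IntegrableOn (fun x => S x / x ^ 2) (Set.Icc (-π) π))
    (σ2 : ℝ) (hσ2 : σ2 = 2 * ∫ x in Set.Icc (-π) π, S x / x ^ 2) :
    Tendsto (fun L : ℝ =>
        ∫ x in Set.Icc (-π) π, ‖phiHatI 0 L x‖ ^ 2 * S x)
      atTop (nhds σ2) ∧
    Tendsto (fun L : ℝ =>
        ∫ x in Set.Icc (-π) π,
          phiHatI 0 L x * (starRingEnd ℂ) (phiHatI L (2 * L) x) * (S x : ℂ))
      atTop (nhds (-(σ2 / 2) : ℂ)) ∧
    ∀ k : ℕ, 2 ≤ k →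
      Tendsto (fun L : ℝ =>
          ∫ x in Set.Icc (-π) π,
            phiHatI 0 L x * (starRingEnd ℂ) (phiHatI (k * L) ((k + 1) * L) x) * (S x : ℂ))
        atTop (nhds (0 : ℂ)) :=
  variance_covariance_intervals_1d_general S hSint σ2 hσ2
end

section
/- Let d ≥ 1 and let S : [-π,π]^d → [0,∞) be measurable with ∫_{[-π,π]^d} S(x)/(x₁² ⋯ x_d²) dx < ∞, and set σ_d² = 2^d ∫_{[-π,π]^d} S(x)/(x₁² ⋯ x_d²) dx. For n = (n₁,…,n_d) with each n_k a nonnegative integer, define φ̂_{n,L}(x) = ∏_{k=1}^{d} (1 - e^{-iLx_k}) e^{-iL n_k x_k} / (i x_k). Then: (i) if n ∈ {0,1}^d and exactly j of its coordinates equal 1 (0 ≤ j ≤ d), then lim_{L→∞} ∫_{[-π,π]^d} φ̂_{0,L}(x) · conj(φ̂_{n,L}(x)) · S(x) dx = (-1)^j σ_d² / 2^j; (ii) if some coordinate n_k ≥ 2, then lim_{L→∞} ∫_{[-π,π]^d} φ̂_{0,L}(x) · conj(φ̂_{n,L}(x)) · S(x) dx = 0. In particular, taking n = 0, the variance integral ∫_{[-π,π]^d}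 |φ̂_{0,L}(x)|² S(x) dx converges to σ_d² as L → ∞. -/
/-
Per coordinate, with `E = exp (i L θ)`, the factor `φ̂₀ · conj φ̂ₘ` equals
`|1 - E|² Eᵐ / θ² = (2 Eᵐ - Eᵐ⁺¹ - Eᵐ⁻¹) / θ²`. Multiplying out over the `d` coordinates writes
`φ̂_{0,L} · conj φ̂_{n,L} · S` as a sum of `3^d` terms `c · exp (i L ⟪a, x⟫) · S x / ∏ x_k²` with
integer frequencies `a`. Since `S / ∏ x_k²` is integrable on the cube, the Riemann–Lebesgue lemma
kills every term with `a ≠ 0` as `L → ∞`. The frequency `0` survives only if every `n_k ≤ 1`, with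
weight `2` for `n_k = 0` and `-1` for `n_k = 1`; hence the limit `2^(d-j) (-1)^j ∫ S / ∏ x_k²`.
-/

open MeasureTheory Real Filter

/-- The cube `[-π, π]^d`. -/
def cube (d : ℕ) : Set (EuclideanSpace ℝ (Fin d)) :=
  {x | ∀ i, x i ∈ Set.Icc (-π) π}

/-- The Fourier transform of the indicator of the box `C_L^{(n)} = ∏_k [n_k L, (n_k+1) L]`. -/
noncomputable def phiHatBox (d : ℕ) (n : Fin d → ℕ) (L : ℝ) (x : EuclideanSpace ℝ (Fin d)) : ℂ :=
  ∏ k : Fin d,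
    (1 - Complex.exp (-Complex.I * (L : ℂ) * (x k : ℂ))) *
      Complex.exp (-Complex.I * (L : ℂ) * (n k : ℂ) * (x k : ℂ)) / (Complex.I * (x k : ℂ))

open Topology Complex ComplexConjugate

section RiemannLebesgue

variable {V : Type*} [NormedAddCommGroup V] [InnerProductSpace ℝ V] [FiniteDimensional ℝ V]
  [MeasurableSpace V] [BorelSpace V]

theorem tendsto_integral_exp_inner_mul_atTop (f : V → ℂ) {a : V} (ha : a ≠ 0) :
    Tendsto (fun L : ℝ => ∫ v, exp (I * L * (inner ℝ a v : ℝ)) * f v) atTop (𝓝 0) := by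
  have hfreq : Tendsto (fun L : ℝ => (L / (2 * π)) • (-a)) atTop (cocompact V) := by
    rw [← Metric.cobounded_eq_cocompact, ← tendsto_norm_atTop_iff_cobounded]
    simp only [norm_smul, norm_neg, Real.norm_eq_abs]
    exact (tendsto_abs_atTop_atTop.comp (tendsto_id.atTop_div_const (by positivity))).atTop_mul_const
      (norm_pos_iff.mpr ha)
  refine ((tendsto_integral_exp_inner_smul_cocompact f).comp hfreq).congr fun L => ?_
  refine integral_congr_ae (Eventually.of_forall fun v => ?_)
  simp only [Circle.smul_def, Real.fourierChar_apply, smul_eq_mul,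
    inner_smul_right, inner_neg_right, real_inner_comm a v]
  congr 2
  push_cast
  field_simp

open scoped Classical in
theorem tendsto_integral_sum_exp_inner_mul_atTop {ι : Type*} [Fintype ι] (c : ι → ℂ) (a : ι → V)
    {f : V → ℂ} (hf : Integrable f) :
    Tendsto (fun L : ℝ => ∫ v, (∑ i, c i * exp (I * L * (inner ℝ (a i) v : ℝ))) * f v) atTop
      (𝓝 ((∑ i with a i = 0, c i) * ∫ v, f v)) := by
  have hterm (L : ℝ) (i : ι) :
      Integrable (fun v => c i * (exp (I * L * (inner ℝ (a i) v : ℝ)) * f v)) := by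
    refine (hf.bdd_mul (c := 1) (by fun_prop) (Eventually.of_forall fun v => ?_)).const_mul _
    simp [norm_exp]
  have hsplit (L : ℝ) : ∫ v, (∑ i, c i * exp (I * L * (inner ℝ (a i) v : ℝ))) * f v =
      ∑ i, c i * ∫ v, exp (I * L * (inner ℝ (a i) v : ℝ)) * f v := by
    simp_rw [Finset.sum_mul, mul_assoc (c _)]
    rw [integral_finsetSum _ fun i _ => hterm L i]
    simp_rw [integral_const_mul]
  simp_rw [hsplit, Finset.sum_filter, Finset.sum_mul]
  refine tendsto_finsetSum _ fun i _ => ?_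
  split_ifs with hi
  · simp [hi]
  · simpa using (tendsto_integral_exp_inner_mul_atTop f hi).const_mul (c i)

end RiemannLebesgue

namespace phiHatBox

noncomputable def factor (L : ℝ) (m : ℕ) (θ : ℝ) : ℂ :=
  (1 - exp (-I * L * θ)) * exp (-I * L * m * θ) / (I * θ)

theorem eq_prod_factor (d : ℕ) (n : Fin d → ℕ) (L : ℝ) (x : EuclideanSpace ℝ (Fin d)) :
    phiHatBox d n L x = ∏ k, factor L (n k) (x k) := rfl

def shift : Fin 3 → ℤ := ![0, 1, -1]

def weight : Fin 3 → ℂ := ![2, -1, -1]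

-- Also true at `θ = 0`, where both sides are `0` by division by zero; so no coordinate
-- hyperplane has to be excluded below.
theorem factor_zero_mul_conj (L θ : ℝ) (m : ℕ) :
    factor L 0 θ * conj (factor L m θ) =
      (∑ i, weight i * exp (I * L * (((m + shift i : ℤ) : ℝ) * θ : ℝ))) / (θ : ℂ) ^ 2 := by
  rcases eq_or_ne θ 0 with rfl | hθ
  · simp [factor]
  set E := exp (I * L * θ) with hE
  have hE0 : E ≠ 0 := exp_ne_zero _
  have hpow (k : ℤ) : exp (I * L * ((k : ℝ) * θ : ℝ)) = E ^ k := by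
    rw [hE, ← exp_int_mul]; push_cast; ring_nf
  have hleft : factor L 0 θ = (1 - E⁻¹) / (I * θ) := by
    simp only [factor, hE, ← Complex.exp_neg]; ring_nf; simp
  have hright : conj (factor L m θ) = (1 - E) * E ^ m / (-I * θ) := by
    simp only [factor, map_div₀, map_mul, map_sub, map_one, ← exp_conj, map_neg, conj_I,
      conj_ofReal, map_natCast, hE, ← Complex.exp_nat_mul]
    ring_nf
  simp only [hpow, Fin.sum_univ_three, shift, weight, Matrix.cons_val_zero, Matrix.cons_val_one,
    Matrix.cons_val_two, Matrix.head_cons, Matrix.tail_cons, zpow_add₀ hE0, zpow_natCast, zpow_one,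
    zpow_neg_one, zpow_zero, mul_one, hleft, hright]
  field_simp
  ring_nf
  simp only [I_sq]
  ring

def frequency {d : ℕ} (n : Fin d → ℕ) (ε : Fin d → Fin 3) : EuclideanSpace ℝ (Fin d) :=
  WithLp.toLp 2 fun k => ((n k + shift (ε k) : ℤ) : ℝ)

theorem frequency_eq_zero_iff {d : ℕ} (n : Fin d → ℕ) (ε : Fin d → Fin 3) :
    frequency n ε = 0 ↔ ∀ k, (n k : ℤ) + shift (ε k) = 0 := by
  simp [frequency, funext_iff, -Int.cast_add]

theorem inner_frequency {d : ℕ} (n : Fin d → ℕ) (ε : Fin d → Fin 3) (x : EuclideanSpace ℝ (Fin d)) :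
    inner ℝ (frequency n ε) x = ∑ k, ((n k + shift (ε k) : ℤ) : ℝ) * x k := by
  simp [frequency, PiLp.inner_apply, mul_comm]

theorem zero_mul_conj_mul (d : ℕ) (n : Fin d → ℕ) (L : ℝ) (x : EuclideanSpace ℝ (Fin d)) (s : ℝ) :
    phiHatBox d 0 L x * conj (phiHatBox d n L x) * s =
      (∑ ε, (∏ k, weight (ε k)) * exp (I * L * (inner ℝ (frequency n ε) x : ℝ))) *
        ((s / ∏ k, x k ^ 2 : ℝ) : ℂ) := by
  simp only [eq_prod_factor, map_prod, ← Finset.prod_mul_distrib, Pi.zero_apply,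
    factor_zero_mul_conj, Finset.prod_div_distrib, Fintype.prod_sum, inner_frequency]
  push_cast
  simp only [Finset.mul_sum, Finset.sum_mul, Finset.prod_mul_distrib, ← Complex.exp_sum]
  rw [Finset.sum_div, Finset.sum_mul]
  exact Finset.sum_congr rfl fun ε _ => by ring

def limitWeight : ℕ → ℂ
  | 0 => 2
  | 1 => -1
  | _ => 0

theorem sum_weight_eq_limitWeight (m : ℕ) :
    (∑ i, if (m : ℤ) + shift i = 0 then weight i else 0) = limitWeight m := by
  rcases m with _ | _ | m <;> simp [Fin.sum_univ_three, shift, weight, limitWeight]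
  norm_cast

theorem limitWeight_of_le_one {m : ℕ} (hm : m ≤ 1) : limitWeight m = 2 * (-1 / 2) ^ m := by
  interval_cases m <;> norm_num [limitWeight]

theorem limitWeight_of_two_le {m : ℕ} (hm : 2 ≤ m) : limitWeight m = 0 := by
  obtain ⟨m, rfl⟩ := Nat.exists_eq_add_of_le' hm
  rfl

theorem prod_limitWeight_of_le_one {d : ℕ} {n : Fin d → ℕ} (hn : ∀ k, n k ≤ 1) :
    ∏ k, limitWeight (n k) = 2 ^ d * (-1 / 2) ^ (Finset.univ.filter fun k => n k = 1).card := by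
  have hsum : ∑ k, n k = (Finset.univ.filter fun k => n k = 1).card := by
    rw [Finset.card_filter]
    exact Finset.sum_congr rfl fun k _ => by have := hn k; split_ifs <;> omega
  simp only [limitWeight_of_le_one (hn _), Finset.prod_mul_distrib, Finset.prod_const,
    Finset.card_univ, Fintype.card_fin, Finset.prod_pow_eq_pow_sum, hsum]

theorem sum_prod_weight_of_frequency_eq_zero {d : ℕ} (n : Fin d → ℕ)
    [DecidablePred fun ε : Fin d → Fin 3 => frequency n ε = 0] :
    ∑ ε with frequency n ε = 0, ∏ k, weight (ε k) = ∏ k, limitWeight (n k) := by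
  simp only [← sum_weight_eq_limitWeight, Fintype.prod_sum, Finset.sum_filter,
    frequency_eq_zero_iff]
  exact Finset.sum_congr rfl fun ε _ => by simp [Fintype.prod_ite_zero]

theorem tendsto_setIntegral_zero_mul_conj_mul {d : ℕ} (n : Fin d → ℕ)
    {S : EuclideanSpace ℝ (Fin d) → ℝ} {s : Set (EuclideanSpace ℝ (Fin d))} (hs : MeasurableSet s)
    (hS : IntegrableOn (fun x => S x / ∏ k, x k ^ 2) s) :
    Tendsto (fun L : ℝ => ∫ x in s, phiHatBox d 0 L x * conj (phiHatBox d n L x) * S x) atTop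
      (𝓝 ((∏ k, limitWeight (n k)) * ∫ x in s, S x / ∏ k, x k ^ 2)) := by
  have hlim := tendsto_integral_sum_exp_inner_mul_atTop (fun ε => ∏ k, weight (ε k)) (frequency n)
    ((integrable_indicator_iff hs).2 (hS.ofReal (𝕜 := ℂ)))
  simp_rw [integral_indicator hs, sum_prod_weight_of_frequency_eq_zero, integral_ofReal] at hlim
  refine hlim.congr fun L => ?_
  simp_rw [zero_mul_conj_mul, ← integral_indicator hs]
  congr 1 with x
  by_cases hx : x ∈ s <;> simp [hx]

end phiHatBox

theorem measurableSet_cube (d : ℕ) : MeasurableSet (cube d) := by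
  simp only [cube, Set.ofPred_forall]
  exact MeasurableSet.iInter fun i => measurableSet_Icc.preimage (by fun_prop)

theorem covariance_boxes_general
    (d : ℕ)
    (S : EuclideanSpace ℝ (Fin d) → ℝ)
    (hSint : IntegrableOn (fun x => S x / ∏ k : Fin d, (x k) ^ 2) (cube d))
    (σd2 : ℝ) (hσd2 : σd2 = 2 ^ d * ∫ x in cube d, S x / ∏ k : Fin d, (x k) ^ 2) :
    (∀ (n : Fin d → ℕ) (j : ℕ), (∀ k, n k ≤ 1) →
        (Finset.univ.filter fun k => n k = 1).card = j →
        Tendsto (fun L : ℝ =>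
            ∫ x in cube d,
              phiHatBox d 0 L x * (starRingEnd ℂ) (phiHatBox d n L x) * (S x : ℂ))
          atTop (nhds (((-1) ^ j * σd2 / 2 ^ j : ℝ) : ℂ))) ∧
    (∀ n : Fin d → ℕ, (∃ k, 2 ≤ n k) →
        Tendsto (fun L : ℝ =>
            ∫ x in cube d,
              phiHatBox d 0 L x * (starRingEnd ℂ) (phiHatBox d n L x) * (S x : ℂ))
          atTop (nhds (0 : ℂ))) ∧
    Tendsto (fun L : ℝ =>
        ∫ x in cube d, ‖phiHatBox d 0 L x‖ ^ 2 * S x)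
      atTop (nhds σd2) := by
  have hlim (n : Fin d → ℕ) :=
    phiHatBox.tendsto_setIntegral_zero_mul_conj_mul n (measurableSet_cube d) hSint
  have hface (n : Fin d → ℕ) (j : ℕ) (hn : ∀ k, n k ≤ 1)
      (hj : (Finset.univ.filter fun k => n k = 1).card = j) :
      Tendsto (fun L : ℝ => ∫ x in cube d, phiHatBox d 0 L x * conj (phiHatBox d n L x) * S x)
        atTop (𝓝 (((-1) ^ j * σd2 / 2 ^ j : ℝ) : ℂ)) := by
    convert hlim n using 2
    rw [phiHatBox.prod_limitWeight_of_le_one hn, hj, hσd2, div_pow]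
    push_cast
    ring
  refine ⟨hface, fun n ⟨k, hk⟩ => ?_, ?_⟩
  · have hzero : ∏ k, phiHatBox.limitWeight (n k) = 0 :=
      Finset.prod_eq_zero (Finset.mem_univ k) (phiHatBox.limitWeight_of_two_le hk)
    simpa [hzero] using hlim n
  · have hvar := hface 0 0 (by simp) (by simp)
    simp_rw [mul_conj', ← ofReal_pow, ← ofReal_mul, integral_complex_ofReal] at hvar
    simpa using tendsto_ofReal_iff.mp hvar

/-- oscillating limits of the covariances of local masses of adjacent boxes
`C_L^{(0)}` and `C_L^{(n)}` for a random field on `ℤ^d` whose structure function `S`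
satisfies `∫ S(x)/(x₁²⋯x_d²) dx < ∞`. -/
theorem covariance_boxes
    (d : ℕ) (hd : 1 ≤ d)
    (S : EuclideanSpace ℝ (Fin d) → ℝ) (hSmeas : Measurable S) (hS0 : ∀ x, 0 ≤ S x)
    (hSint : IntegrableOn (fun x => S x / ∏ k : Fin d, (x k) ^ 2) (cube d))
    (σd2 : ℝ) (hσd2 : σd2 = 2 ^ d * ∫ x in cube d, S x / ∏ k : Fin d, (x k) ^ 2) :
    (∀ (n : Fin d → ℕ) (j : ℕ), (∀ k, n k ≤ 1) →
        (Finset.univ.filter fun k => n k = 1).card = j →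
        Tendsto (fun L : ℝ =>
            ∫ x in cube d,
              phiHatBox d 0 L x * (starRingEnd ℂ) (phiHatBox d n L x) * (S x : ℂ))
          atTop (nhds (((-1) ^ j * σd2 / 2 ^ j : ℝ) : ℂ))) ∧
    (∀ n : Fin d → ℕ, (∃ k, 2 ≤ n k) →
        Tendsto (fun L : ℝ =>
            ∫ x in cube d,
              phiHatBox d 0 L x * (starRingEnd ℂ) (phiHatBox d n L x) * (S x : ℂ))
          atTop (nhds (0 : ℂ))) ∧
    Tendsto (fun L : ℝ =>
        ∫ x in cube d, ‖phiHatBox d 0 L x‖ ^ 2 * S x)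
      atTop (nhds σd2) :=
  covariance_boxes_general d S hSint σd2 hσd2
end
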